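/- arXiv:0901.0761 — 2 statements merged into one kernel-verified Lean document; each statement's English description precedes it below -/
import Mathlib

section
/- Every divergence-free element of the face element space W²_p is the curl of an element of the Nédélec space W¹_p. -/
open MeasureTheory

/-- Partial derivative of a scalar function on ℝ³. -/
noncomputable def pd3 (f : (Fin 3 → ℝ) → ℝ) (i : Fin 3) (x : Fin 3 → ℝ) : ℝ :=
  fderiv ℝ f x (Pi.single i 1)

/-- Curl of a vector field on ℝ³. -/
noncomputable def curl3 (u : (Fin 3 → ℝ) → (Fin 3 → ℝ)) (x : Fin 3 → ℝ) : Fin 3 → ℝ :=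
  ![pd3 (fun y => u y 2) 1 x - pd3 (fun y => u y 1) 2 x,
    pd3 (fun y => u y 0) 2 x - pd3 (fun y => u y 2) 0 x,
    pd3 (fun y => u y 1) 0 x - pd3 (fun y => u y 0) 1 x]

/-- Divergence of a vector field on ℝ³. -/
noncomputable def div3 (u : (Fin 3 → ℝ) → (Fin 3 → ℝ)) (x : Fin 3 → ℝ) : ℝ :=
  ∑ i, pd3 (fun y => u y i) i x

/-- Gradient of a scalar field on ℝ³. -/
noncomputable def grad3 (f : (Fin 3 → ℝ) → ℝ) (x : Fin 3 → ℝ) : Fin 3 → ℝ :=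
  fun i => pd3 f i x

/-- Cross product in ℝ³. -/
def cross3 (a b : Fin 3 → ℝ) : Fin 3 → ℝ :=
  ![a 1 * b 2 - a 2 * b 1, a 2 * b 0 - a 0 * b 2, a 0 * b 1 - a 1 * b 0]

/-- Euclidean dot product in ℝ³. -/
def dot3 (a b : Fin 3 → ℝ) : ℝ := ∑ i, a i * b i

/-- `f` is (given by) a polynomial of total degree ≤ p. -/
def IsPoly3 (p : ℕ) (f : (Fin 3 → ℝ) → ℝ) : Prop :=
  ∃ q : MvPolynomial (Fin 3) ℝ, q.totalDegree ≤ p ∧ ∀ x, f x = MvPolynomial.eval x q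

/-- Vector field whose components are polynomials of total degree ≤ p. -/
def IsPolyVec3 (p : ℕ) (u : (Fin 3 → ℝ) → (Fin 3 → ℝ)) : Prop :=
  ∀ i, IsPoly3 p (fun x => u x i)

/-- First-family Nédélec space of degree p (as a set of vector fields). -/
def NedelecW1 (p : ℕ) : Set ((Fin 3 → ℝ) → (Fin 3 → ℝ)) :=
  {v | ∃ P Q, IsPolyVec3 p P ∧ IsPolyVec3 p Q ∧ ∀ x, v x = P x + cross3 (Q x) x}

/-- Face-element (second family) space of degree p. -/
def NedelecW2 (p : ℕ) : Set ((Fin 3 → ℝ) → (Fin 3 → ℝ)) :=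
  {v | ∃ P q, IsPolyVec3 p P ∧ IsPoly3 p q ∧ ∀ x, v x = P x + q x • x}

/-- Poincaré lifting with center a. -/
noncomputable def Rlift (a : Fin 3 → ℝ) (u : (Fin 3 → ℝ) → (Fin 3 → ℝ))
    (x : Fin 3 → ℝ) : Fin 3 → ℝ :=
  cross3 (∫ t in (0:ℝ)..1, t • u (a + t • (x - a))) (x - a)

/-- Degree-2 Poincaré lifting with center a. -/
noncomputable def Dlift (a : Fin 3 → ℝ) (u : (Fin 3 → ℝ) → ℝ)
    (x : Fin 3 → ℝ) : Fin 3 → ℝ :=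
  (∫ t in (0:ℝ)..1, t ^ 2 * u (a + t • (x - a))) • (x - a)

/-!
On polynomial vector fields `curl (Q × x) = 2 Q + (x · ∇) Q - (div Q) x`, which gives
`curl W¹_p ⊆ W²_p`, while `div ∘ curl = 0`. Conversely, let `v = P + q x` be divergence free.
In degree `p`, `div v` equals `(p + 3)` times the degree-`p` part of `q`, so that part vanishes and
`deg v ≤ p`. The Euler operator `x · ∇` multiplies the degree-`k` part of a polynomial by `k`, so
`Q := ∑ₖ vₖ / (k + 2)` satisfies `2 Q + (x · ∇) Q = v`; differentiation shifts degrees by one, so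
`div Q = 0` as well, and `curl (Q × x) = v` with `Q` of degree `≤ p`.
-/

open MvPolynomial

section Degree

variable {σ R : Type*} [CommSemiring R]

theorem totalDegree_le_iff_coeff_eq_zero {f : MvPolynomial σ R} {n : ℕ} :
    f.totalDegree ≤ n ↔ ∀ d : σ →₀ ℕ, n < d.degree → coeff d f = 0 :=
  ⟨fun h _ hd => coeff_eq_zero_of_totalDegree_lt (h.trans_lt hd),
    fun h => Finset.sup_le fun d hd => not_lt.1 fun hlt => mem_support_iff.1 hd (h d hlt)⟩

theorem degree_add_single_one (d : σ →₀ ℕ) (i : σ) :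
    (d + Finsupp.single i 1).degree = d.degree + 1 := by
  rw [map_add, Finsupp.degree_single]

theorem totalDegree_pderiv_le (f : MvPolynomial σ R) (i : σ) :
    (pderiv i f).totalDegree ≤ f.totalDegree := by
  refine totalDegree_le_iff_coeff_eq_zero.2 fun d hd => ?_
  rw [coeff_pderiv, totalDegree_le_iff_coeff_eq_zero.1 le_rfl, zero_mul]
  exact hd.trans ((Nat.lt_succ_self _).trans_eq (degree_add_single_one d i).symm)

theorem pderiv_pderiv_comm (i j : σ) (f : MvPolynomial σ R) :
    pderiv i (pderiv j f) = pderiv j (pderiv i f) := by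
  classical
  ext d
  rcases eq_or_ne i j with rfl | hij
  · rfl
  · simp only [coeff_pderiv, Finsupp.add_apply, Finsupp.single_apply, if_neg hij,
      if_neg hij.symm, add_zero, add_right_comm d]
    ring

theorem totalDegree_mul_X_le_of_coeff_eq_zero {q : MvPolynomial σ R} {n : ℕ}
    (hq : ∀ d : σ →₀ ℕ, n ≤ d.degree → coeff d q = 0) (i : σ) :
    (q * X i).totalDegree ≤ n := by
  classical
  refine totalDegree_le_iff_coeff_eq_zero.2 fun m hm => ?_
  rw [coeff_mul_X']
  split_ifs with hi
  · obtain ⟨d, rfl⟩ : ∃ d, m = d + Finsupp.single i 1 :=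
      ⟨m - Finsupp.single i 1, (tsub_add_cancel_of_le (Finsupp.single_le_iff.2
        (Nat.one_le_iff_ne_zero.2 (Finsupp.mem_support_iff.1 hi)))).symm⟩
    rw [add_tsub_cancel_right]
    rw [degree_add_single_one] at hm
    exact hq d (Nat.lt_succ_iff.1 hm)
  · rfl

theorem coeff_sum_X_mul_pderiv [Fintype σ] (f : MvPolynomial σ R) (d : σ →₀ ℕ) :
    coeff d (∑ i, X i * pderiv i f) = d.degree * coeff d f := by
  classical
  induction f using MvPolynomial.induction_on' with
  | add f g hf hg => simp only [map_add, mul_add, Finset.sum_add_distrib, coeff_add, hf, hg]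
  | monomial m r =>
    simp_rw [X_mul_pderiv_monomial, ← Finset.sum_smul, coeff_smul, coeff_monomial,
      Finsupp.degree_eq_sum, nsmul_eq_mul]
    split_ifs with h <;> simp [h]

theorem totalDegree_sum_X_mul_pderiv_le [Fintype σ] (f : MvPolynomial σ R) :
    (∑ i, X i * pderiv i f).totalDegree ≤ f.totalDegree :=
  totalDegree_le_iff_coeff_eq_zero.2 fun d hd => by
    rw [coeff_sum_X_mul_pderiv, coeff_eq_zero_of_totalDegree_lt hd, mul_zero]

end Degree

section DegreeScale

variable {σ R : Type*} [CommSemiring R]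

noncomputable def degreeScale (c : ℕ → R) (f : MvPolynomial σ R) : MvPolynomial σ R :=
  ∑ d ∈ f.support, monomial d (c d.degree * coeff d f)

@[simp]
theorem coeff_degreeScale (c : ℕ → R) (f : MvPolynomial σ R) (d : σ →₀ ℕ) :
    coeff d (degreeScale c f) = c d.degree * coeff d f := by
  classical
  simp only [degreeScale, coeff_sum, coeff_monomial, Finset.sum_ite_eq', mem_support_iff]
  split_ifs with h
  · rfl
  · rw [not_not.1 h, mul_zero]

theorem totalDegree_degreeScale_le (c : ℕ → R) (f : MvPolynomial σ R) :
    (degreeScale c f).totalDegree ≤ f.totalDegree :=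
  totalDegree_le_iff_coeff_eq_zero.2 fun d hd => by
    rw [coeff_degreeScale, coeff_eq_zero_of_totalDegree_lt hd, mul_zero]

theorem pderiv_degreeScale (c : ℕ → R) (f : MvPolynomial σ R) (i : σ) :
    pderiv i (degreeScale c f) = degreeScale (fun k => c (k + 1)) (pderiv i f) := by
  ext d
  simp only [coeff_pderiv, coeff_degreeScale, degree_add_single_one, mul_assoc]

theorem two_smul_add_sum_X_mul_pderiv_degreeScale [Fintype σ] {c : ℕ → R}
    (hc : ∀ k : ℕ, ((k : R) + 2) * c k = 1) (f : MvPolynomial σ R) :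
    2 • degreeScale c f + ∑ i, X i * pderiv i (degreeScale c f) = f := by
  ext d
  rw [coeff_add, coeff_sum_X_mul_pderiv, coeff_smul, coeff_degreeScale, nsmul_eq_mul,
    Nat.cast_ofNat, ← add_mul, ← mul_assoc, add_comm (2 : R), hc, one_mul]

end DegreeScale

section Divergence

variable {σ R : Type*} [CommSemiring R] [Fintype σ]

noncomputable def polyDiv (V : σ → MvPolynomial σ R) : MvPolynomial σ R :=
  ∑ i, pderiv i (V i)

theorem polyDiv_add (V W : σ → MvPolynomial σ R) : polyDiv (V + W) = polyDiv V + polyDiv W := by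
  simp only [polyDiv, Pi.add_apply, map_add, Finset.sum_add_distrib]

theorem polyDiv_mul_X (q : MvPolynomial σ R) :
    polyDiv (fun i => q * X i) = ∑ i, X i * pderiv i q + Fintype.card σ • q := by
  simp only [polyDiv, pderiv_mul, pderiv_X_self, mul_one, Finset.sum_add_distrib,
    Finset.sum_const, Finset.card_univ, mul_comm (pderiv _ q)]

theorem polyDiv_degreeScale (c : ℕ → R) (V : σ → MvPolynomial σ R) :
    polyDiv (fun i => degreeScale c (V i)) = degreeScale (fun k => c (k + 1)) (polyDiv V) := by
  ext d
  simp only [polyDiv, pderiv_degreeScale, coeff_sum, coeff_degreeScale, Finset.mul_sum]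

theorem totalDegree_polyDiv_le {V : σ → MvPolynomial σ R} {n : ℕ}
    (hV : ∀ i, (V i).totalDegree ≤ n) : (polyDiv V).totalDegree ≤ n :=
  totalDegree_finsetSum_le fun i _ => (totalDegree_pderiv_le _ i).trans (hV i)

/-- The divergence of `P + q x` in degree `n` is `(n + card σ) q_n` when `deg P ≤ n`. -/
theorem coeff_eq_zero_of_polyDiv_add_mul_X_eq_zero [NoZeroDivisors R] [CharZero R] [Nonempty σ]
    {P : σ → MvPolynomial σ R} {q : MvPolynomial σ R} {n : ℕ}
    (hP : ∀ i, (P i).totalDegree ≤ n) (hq : q.totalDegree ≤ n)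
    (hdiv : polyDiv (fun i => P i + q * X i) = 0) (d : σ →₀ ℕ) (hd : n ≤ d.degree) :
    coeff d q = 0 := by
  rcases hd.lt_or_eq with hlt | rfl
  · exact coeff_eq_zero_of_totalDegree_lt (hq.trans_lt hlt)
  have hdivP : coeff d (polyDiv P) = 0 := by
    rw [polyDiv, coeff_sum]
    refine Finset.sum_eq_zero fun i _ => ?_
    rw [coeff_pderiv, totalDegree_le_iff_coeff_eq_zero.1 (hP i), zero_mul]
    exact (Nat.lt_succ_self _).trans_eq (degree_add_single_one d i).symm
  have h := congrArg (coeff d) hdiv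
  rw [show (fun i => P i + q * X i) = P + fun i => q * X i from rfl, polyDiv_add, polyDiv_mul_X,
    coeff_add, hdivP, zero_add, coeff_add, coeff_sum_X_mul_pderiv, coeff_smul, nsmul_eq_mul,
    ← add_mul, coeff_zero] at h
  exact (mul_eq_zero.1 h).resolve_left
    (by exact_mod_cast (Nat.add_pos_right _ Fintype.card_pos).ne')

end Divergence

section Curl

variable {R : Type*} [CommRing R]

noncomputable def polyCurl (V : Fin 3 → MvPolynomial (Fin 3) R) : Fin 3 → MvPolynomial (Fin 3) R :=
  ![pderiv 1 (V 2) - pderiv 2 (V 1), pderiv 2 (V 0) - pderiv 0 (V 2),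
    pderiv 0 (V 1) - pderiv 1 (V 0)]

noncomputable def crossX (Q : Fin 3 → MvPolynomial (Fin 3) R) : Fin 3 → MvPolynomial (Fin 3) R :=
  ![Q 1 * X 2 - Q 2 * X 1, Q 2 * X 0 - Q 0 * X 2, Q 0 * X 1 - Q 1 * X 0]

theorem polyCurl_add (V W : Fin 3 → MvPolynomial (Fin 3) R) :
    polyCurl (V + W) = polyCurl V + polyCurl W := by
  ext1 i
  fin_cases i <;>
    simp only [polyCurl, Pi.add_apply, map_add, Fin.zero_eta, Fin.mk_one, Fin.reduceFinMk,
      Matrix.cons_val] <;> ring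

theorem polyDiv_polyCurl (V : Fin 3 → MvPolynomial (Fin 3) R) : polyDiv (polyCurl V) = 0 := by
  simp only [polyDiv, polyCurl, Fin.sum_univ_three, Matrix.cons_val, map_sub]
  rw [pderiv_pderiv_comm 0 1, pderiv_pderiv_comm 0 2, pderiv_pderiv_comm 1 2]
  ring

theorem polyCurl_crossX (Q : Fin 3 → MvPolynomial (Fin 3) R) (l : Fin 3) :
    polyCurl (crossX Q) l = 2 • Q l + ∑ k, X k * pderiv k (Q l) - polyDiv Q * X l := by
  fin_cases l <;>
    simp only [polyCurl, crossX, polyDiv, Fin.sum_univ_three, Matrix.cons_val, map_sub,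
      pderiv_mul, pderiv_X, Pi.single_apply, Fin.reduceEq, if_true, if_false, nsmul_eq_mul,
      Fin.zero_eta, Fin.mk_one, Fin.reduceFinMk] <;> ring

theorem totalDegree_polyCurl_le {V : Fin 3 → MvPolynomial (Fin 3) R} {n : ℕ}
    (hV : ∀ i, (V i).totalDegree ≤ n) (l : Fin 3) : (polyCurl V l).totalDegree ≤ n := by
  fin_cases l <;>
    exact (totalDegree_sub _ _).trans
      (max_le ((totalDegree_pderiv_le _ _).trans (hV _)) ((totalDegree_pderiv_le _ _).trans (hV _)))

theorem exists_polyCurl_add_crossX_eq {P Q : Fin 3 → MvPolynomial (Fin 3) R} {n : ℕ}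
    (hP : ∀ i, (P i).totalDegree ≤ n) (hQ : ∀ i, (Q i).totalDegree ≤ n) :
    ∃ (P' : Fin 3 → MvPolynomial (Fin 3) R) (q' : MvPolynomial (Fin 3) R),
      (∀ i, (P' i).totalDegree ≤ n) ∧ q'.totalDegree ≤ n ∧
        polyCurl (P + crossX Q) = fun i => P' i + q' * X i := by
  refine ⟨fun l => polyCurl P l + (2 • Q l + ∑ k, X k * pderiv k (Q l)), -polyDiv Q,
    fun l => ?_, ?_, ?_⟩
  · refine (totalDegree_add _ _).trans (max_le (totalDegree_polyCurl_le hP l) ?_)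
    exact (totalDegree_add _ _).trans (max_le ((totalDegree_smul_le _ _).trans (hQ l))
      ((totalDegree_sum_X_mul_pderiv_le _).trans (hQ l)))
  · rw [totalDegree_neg]
    exact totalDegree_polyDiv_le hQ
  · ext1 l
    rw [polyCurl_add, Pi.add_apply, polyCurl_crossX, neg_mul, add_assoc, sub_eq_add_neg]

end Curl

section Potential

variable {K : Type*} [Field K] [CharZero K]

theorem polyCurl_crossX_degreeScale {V : Fin 3 → MvPolynomial (Fin 3) K} (hV : polyDiv V = 0) :
    polyCurl (crossX fun i => degreeScale (fun k => ((k : K) + 2)⁻¹) (V i)) = V := by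
  have hc : ∀ k : ℕ, ((k : K) + 2) * ((k : K) + 2)⁻¹ = 1 := fun k =>
    mul_inv_cancel₀ (by exact_mod_cast Nat.succ_ne_zero (k + 1))
  ext1 l
  have hdiv : polyDiv (fun i => degreeScale (fun k => ((k : K) + 2)⁻¹) (V i)) = 0 := by
    ext d
    rw [polyDiv_degreeScale, hV, coeff_degreeScale, coeff_zero, mul_zero]
  rw [polyCurl_crossX, hdiv, zero_mul, sub_zero, two_smul_add_sum_X_mul_pderiv_degreeScale hc]

theorem exists_polyCurl_crossX_eq {P : Fin 3 → MvPolynomial (Fin 3) K} {q : MvPolynomial (Fin 3) K}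
    {n : ℕ} (hP : ∀ i, (P i).totalDegree ≤ n) (hq : q.totalDegree ≤ n)
    (hdiv : polyDiv (fun i => P i + q * X i) = 0) :
    ∃ Q : Fin 3 → MvPolynomial (Fin 3) K, (∀ i, (Q i).totalDegree ≤ n) ∧
      polyCurl (crossX Q) = fun i => P i + q * X i := by
  have hq_top := coeff_eq_zero_of_polyDiv_add_mul_X_eq_zero hP hq hdiv
  refine ⟨_, fun i => ?_, polyCurl_crossX_degreeScale hdiv⟩
  exact (totalDegree_degreeScale_le _ _).trans ((totalDegree_add _ _).trans
    (max_le (hP i) (totalDegree_mul_X_le_of_coeff_eq_zero hq_top i)))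

end Potential

section Analysis

variable {σ 𝕜 : Type*} [Fintype σ] [NontriviallyNormedField 𝕜]

theorem hasFDerivAt_eval (f : MvPolynomial σ 𝕜) (x : σ → 𝕜) :
    HasFDerivAt (fun y => eval y f)
      (∑ j, eval x (pderiv j f) • ContinuousLinearMap.proj (R := 𝕜) (φ := fun _ => 𝕜) j) x := by
  classical
  induction f using MvPolynomial.induction_on with
  | C a =>
    simp only [eval_C]
    exact (hasFDerivAt_const a x).congr_fderiv (by ext; simp)
  | add f g hf hg =>
    simp only [eval_add]
    exact (hf.add hg).congr_fderiv (by ext; simp [add_mul, Finset.sum_add_distrib])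
  | mul_X f i hf =>
    simp only [eval_mul, eval_X]
    refine (hf.mul (hasFDerivAt_apply i x)).congr_fderiv ?_
    ext v
    simp [pderiv_X, Pi.single_apply, apply_ite, add_mul, ite_mul, mul_assoc,
      Finset.sum_add_distrib, Finset.mul_sum]

theorem fderiv_eval_apply_single [DecidableEq σ] (f : MvPolynomial σ 𝕜) (x : σ → 𝕜) (i : σ) :
    fderiv 𝕜 (fun y => eval y f) x (Pi.single i 1) = eval x (pderiv i f) := by
  simp [(hasFDerivAt_eval f x).fderiv, Pi.single_apply]

end Analysis

section Fields

noncomputable def evalVec {σ ι R : Type*} [CommSemiring R] (W : ι → MvPolynomial σ R)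
    (x : σ → R) : ι → R :=
  fun i => eval x (W i)

theorem evalVec_add {σ ι R : Type*} [CommSemiring R] (V W : ι → MvPolynomial σ R) (x : σ → R) :
    evalVec (V + W) x = evalVec V x + evalVec W x :=
  funext fun _ => eval_add

theorem pd3_eval (f : MvPolynomial (Fin 3) ℝ) (i : Fin 3) (x : Fin 3 → ℝ) :
    pd3 (fun y => eval y f) i x = eval x (pderiv i f) :=
  fderiv_eval_apply_single f x i

theorem div3_evalVec (W : Fin 3 → MvPolynomial (Fin 3) ℝ) (x : Fin 3 → ℝ) :
    div3 (evalVec W) x = eval x (polyDiv W) := by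
  simp only [div3, evalVec, pd3_eval, polyDiv, map_sum]

theorem curl3_evalVec (W : Fin 3 → MvPolynomial (Fin 3) ℝ) (x : Fin 3 → ℝ) :
    curl3 (evalVec W) x = evalVec (polyCurl W) x := by
  ext l
  fin_cases l <;> simp [curl3, evalVec, pd3_eval, polyCurl]

theorem cross3_evalVec (Q : Fin 3 → MvPolynomial (Fin 3) ℝ) (x : Fin 3 → ℝ) :
    cross3 (evalVec Q x) x = evalVec (crossX Q) x := by
  ext l
  fin_cases l <;> simp [cross3, evalVec, crossX]

theorem isPolyVec3_iff {p : ℕ} {u : (Fin 3 → ℝ) → Fin 3 → ℝ} :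
    IsPolyVec3 p u ↔
      ∃ W : Fin 3 → MvPolynomial (Fin 3) ℝ, (∀ i, (W i).totalDegree ≤ p) ∧ u = evalVec W := by
  constructor
  · intro hu
    choose W hW hWu using hu
    exact ⟨W, hW, funext fun x => funext fun i => hWu i x⟩
  · rintro ⟨W, hW, rfl⟩ i
    exact ⟨W i, hW i, fun x => rfl⟩

theorem mem_nedelecW1_iff {p : ℕ} {u : (Fin 3 → ℝ) → Fin 3 → ℝ} :
    u ∈ NedelecW1 p ↔ ∃ P Q : Fin 3 → MvPolynomial (Fin 3) ℝ, (∀ i, (P i).totalDegree ≤ p) ∧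
      (∀ i, (Q i).totalDegree ≤ p) ∧ u = evalVec (P + crossX Q) := by
  constructor
  · rintro ⟨_, _, hP, hQ, hu⟩
    obtain ⟨P, hPd, rfl⟩ := isPolyVec3_iff.1 hP
    obtain ⟨Q, hQd, rfl⟩ := isPolyVec3_iff.1 hQ
    refine ⟨P, Q, hPd, hQd, funext fun x => ?_⟩
    rw [hu, cross3_evalVec, evalVec_add]
  · rintro ⟨P, Q, hP, hQ, rfl⟩
    refine ⟨_, _, isPolyVec3_iff.2 ⟨P, hP, rfl⟩, isPolyVec3_iff.2 ⟨Q, hQ, rfl⟩, fun x => ?_⟩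
    rw [cross3_evalVec, evalVec_add]

theorem mem_nedelecW2_iff {p : ℕ} {v : (Fin 3 → ℝ) → Fin 3 → ℝ} :
    v ∈ NedelecW2 p ↔ ∃ (P : Fin 3 → MvPolynomial (Fin 3) ℝ) (q : MvPolynomial (Fin 3) ℝ),
      (∀ i, (P i).totalDegree ≤ p) ∧ q.totalDegree ≤ p ∧ v = evalVec fun i => P i + q * X i := by
  constructor
  · rintro ⟨_, _, hP, ⟨q, hqd, hq⟩, hv⟩
    obtain ⟨P, hPd, rfl⟩ := isPolyVec3_iff.1 hP
    refine ⟨P, q, hPd, hqd, funext fun x => funext fun i => ?_⟩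
    simp [hv, hq, evalVec]
  · rintro ⟨P, q, hP, hq, rfl⟩
    refine ⟨_, fun x => eval x q, isPolyVec3_iff.2 ⟨P, hP, rfl⟩, ⟨q, hq, fun x => rfl⟩,
      fun x => funext fun i => ?_⟩
    simp [evalVec]

end Fields

/-- `{v ∈ W²_p : div v = 0} = curl(W¹_p)`. -/
theorem divfree_W2_eq_curl_W1 (p : ℕ) :
    {v | v ∈ NedelecW2 p ∧ ∀ x, div3 v x = 0} =
      {v | ∃ u ∈ NedelecW1 p, ∀ x, v x = curl3 u x} := by
  ext v
  constructor
  · rintro ⟨hv, hdiv⟩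
    obtain ⟨P, q, hP, hq, rfl⟩ := mem_nedelecW2_iff.1 hv
    have hdiv' : polyDiv (fun i => P i + q * X i) = 0 :=
      MvPolynomial.funext fun x => by rw [← div3_evalVec, hdiv, map_zero]
    obtain ⟨Q, hQ, hcurl⟩ := exists_polyCurl_crossX_eq hP hq hdiv'
    have hu : evalVec (crossX Q) ∈ NedelecW1 p :=
      mem_nedelecW1_iff.2 ⟨0, Q, fun _ => totalDegree_zero.trans_le p.zero_le, hQ, by rw [zero_add]⟩
    exact ⟨_, hu, fun x => by rw [curl3_evalVec, hcurl]⟩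
  · rintro ⟨u, hu, hv⟩
    obtain ⟨P, Q, hP, hQ, rfl⟩ := mem_nedelecW1_iff.1 hu
    obtain ⟨P', q', hP', hq', hcurl⟩ := exists_polyCurl_add_crossX_eq hP hQ
    obtain rfl : v = evalVec (polyCurl (P + crossX Q)) :=
      funext fun x => (hv x).trans (curl3_evalVec _ x)
    refine ⟨mem_nedelecW2_iff.2 ⟨P', q', hP', hq', by rw [hcurl]⟩, fun x => ?_⟩
    rw [div3_evalVec, polyDiv_polyCurl, map_zero]
end

section
/- The tangential trace onto an edge e of the degree-p Nédélec space on a tetrahedron is exactly the space of degree-p polynomials on the edge: W¹_p(T)·t_e = P_p(e). -/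
open MeasureTheory

/-! On the line `x = a + s t` we have `(q × x)·t = (q × a)·t = q·(a × t)`, because `(q × t)·t = 0`.
Hence the tangential trace of `P + Q × x` is the restriction to the line of the degree-`p`
polynomial `P·t + Q·(a × t)`, and restricting a polynomial to a line does not raise its degree.
Conversely, since `|t| = 1`, the univariate polynomial `q` is the trace of the polynomial field
`x ↦ q((x - a)·t) t`, which lies in `𝐏_p³ ⊆ W¹_p`. -/

open Polynomial in
theorem MvPolynomial.natDegree_aeval_le {R σ : Type*} [CommSemiring R] (Q : MvPolynomial σ R)
    {g : σ → R[X]} {d : ℕ} (hg : ∀ i, (g i).natDegree ≤ d) :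
    (aeval g Q).natDegree ≤ Q.totalDegree * d := by
  conv_lhs => rw [← Q.support_sum_monomial_coeff]
  rw [map_sum]
  refine natDegree_sum_le_of_forall_le _ _ fun m hm => ?_
  rw [aeval_monomial, Polynomial.algebraMap_eq]
  calc _ ≤ (m.prod fun i k => g i ^ k).natDegree := natDegree_C_mul_le _ _
    _ ≤ m.sum fun _ k => k * d :=
        (natDegree_prod_le _ _).trans <| Finset.sum_le_sum fun i _ =>
          natDegree_pow_le.trans (Nat.mul_le_mul_left _ (hg i))
    _ = (m.sum fun _ k => k) * d := by simp only [Finsupp.sum, Finset.sum_mul]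
    _ ≤ Q.totalDegree * d := Nat.mul_le_mul_right _ (MvPolynomial.le_totalDegree hm)

theorem MvPolynomial.totalDegree_polynomial_aeval_le {R σ : Type*} [CommSemiring R]
    (q : Polynomial R) (L : MvPolynomial σ R) :
    (Polynomial.aeval L q).totalDegree ≤ q.natDegree * L.totalDegree := by
  rw [Polynomial.aeval_eq_sum_range]
  refine (totalDegree_finsetSum _ _).trans (Finset.sup_le fun i hi => ?_)
  calc _ ≤ (L ^ i).totalDegree := totalDegree_smul_le _ _
    _ ≤ i * L.totalDegree := totalDegree_pow _ _
    _ ≤ q.natDegree * L.totalDegree :=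
        Nat.mul_le_mul_right _ (Nat.lt_succ_iff.mp (Finset.mem_range.mp hi))

theorem dot3_eq_dotProduct (u w : Fin 3 → ℝ) : dot3 u w = u ⬝ᵥ w := rfl

theorem dot3_inv_sqrt_smul_self {u : Fin 3 → ℝ} (hu : u ≠ 0) :
    dot3 ((√(dot3 u u))⁻¹ • u) ((√(dot3 u u))⁻¹ • u) = 1 := by
  have hpos : 0 < u ⬝ᵥ u :=
    lt_of_le_of_ne (Finset.sum_nonneg fun i _ => mul_self_nonneg (u i))
      (Ne.symm (mt dotProduct_self_eq_zero.mp hu))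
  simp only [dot3_eq_dotProduct, smul_dotProduct, dotProduct_smul, smul_eq_mul]
  field_simp
  exact (Real.sq_sqrt hpos.le).symm

theorem dot3_cross3_add_smul (q a t : Fin 3 → ℝ) (s : ℝ) :
    dot3 (cross3 q (a + s • t)) t = dot3 q (cross3 a t) := by
  simp only [dot3, cross3, Fin.sum_univ_three, Pi.add_apply, Pi.smul_apply, smul_eq_mul,
    Matrix.cons_val_zero, Matrix.cons_val_one, Matrix.cons_val_two, Matrix.head_cons,
    Matrix.tail_cons]
  ring

namespace IsPoly3

variable {p : ℕ} {f g : (Fin 3 → ℝ) → ℝ}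

theorem mono {p' : ℕ} (hf : IsPoly3 p f) (h : p ≤ p') : IsPoly3 p' f :=
  let ⟨Q, hQ, hfQ⟩ := hf
  ⟨Q, hQ.trans h, hfQ⟩

theorem const (c : ℝ) : IsPoly3 p fun _ => c :=
  ⟨MvPolynomial.C c, by simp, by simp⟩

theorem add (hf : IsPoly3 p f) (hg : IsPoly3 p g) : IsPoly3 p fun x => f x + g x :=
  let ⟨Q, hQ, hfQ⟩ := hf
  let ⟨R, hR, hgR⟩ := hg
  ⟨Q + R, (MvPolynomial.totalDegree_add _ _).trans (max_le hQ hR), by simp [hfQ, hgR]⟩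

theorem mul_const (hf : IsPoly3 p f) (c : ℝ) : IsPoly3 p fun x => f x * c :=
  let ⟨Q, hQ, hfQ⟩ := hf
  ⟨c • Q, (MvPolynomial.totalDegree_smul_le _ _).trans hQ, by simp [hfQ, mul_comm]⟩

theorem smul_const (hf : IsPoly3 p f) (c : Fin 3 → ℝ) : IsPolyVec3 p fun x => f x • c :=
  fun i => hf.mul_const (c i)

theorem sum {ι : Type*} (s : Finset ι) {f : ι → (Fin 3 → ℝ) → ℝ}
    (hf : ∀ i ∈ s, IsPoly3 p (f i)) : IsPoly3 p fun x => ∑ i ∈ s, f i x := by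
  classical
  induction s using Finset.induction_on with
  | empty => simpa using const 0
  | insert i s hi ih =>
    simp_rw [Finset.sum_insert hi]
    exact (hf i (Finset.mem_insert_self i s)).add
      (ih fun j hj => hf j (Finset.mem_insert_of_mem hj))

theorem polynomial_eval (hf : IsPoly3 p f) (q : Polynomial ℝ) :
    IsPoly3 (q.natDegree * p) fun x => q.eval (f x) :=
  let ⟨L, hL, hfL⟩ := hf
  ⟨Polynomial.aeval L q,
    (MvPolynomial.totalDegree_polynomial_aeval_le q L).trans (Nat.mul_le_mul_left _ hL),
    fun x => by
      change q.eval (f x) = _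
      rw [hfL, ← Polynomial.coe_aeval_eq_eval]
      exact Polynomial.aeval_algHom_apply (MvPolynomial.aeval x) L q⟩

open Polynomial in
theorem exists_polynomial_eval_line (hf : IsPoly3 p f) (a t : Fin 3 → ℝ) :
    ∃ q : ℝ[X], q.natDegree ≤ p ∧ ∀ s : ℝ, f (a + s • t) = q.eval s := by
  obtain ⟨Q, hQ, hfQ⟩ := hf
  refine ⟨MvPolynomial.aeval (fun i => C (t i) * X + C (a i)) Q, ?_, fun s => ?_⟩
  · exact (Q.natDegree_aeval_le fun i => natDegree_linear_le).trans (by simpa using hQ)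
  · rw [hfQ, ← coe_aeval_eq_eval, MvPolynomial.comp_aeval_apply]
    change _ = MvPolynomial.eval _ Q
    congr 2
    funext i
    simp only [Pi.add_apply, Pi.smul_apply, smul_eq_mul, map_add, map_mul, aeval_C, aeval_X,
      Algebra.algebraMap_self, RingHom.id_apply]
    ring

end IsPoly3

theorem isPolyVec3_sub_const (a : Fin 3 → ℝ) : IsPolyVec3 1 fun x => x - a := fun i =>
  ⟨MvPolynomial.X i - MvPolynomial.C (a i),
    (MvPolynomial.totalDegree_sub _ _).trans (by simp [MvPolynomial.totalDegree_X]), by simp⟩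

theorem IsPolyVec3.dot3_const {p : ℕ} {P : (Fin 3 → ℝ) → Fin 3 → ℝ} (hP : IsPolyVec3 p P)
    (c : Fin 3 → ℝ) : IsPoly3 p fun x => dot3 (P x) c :=
  IsPoly3.sum _ fun i _ => (hP i).mul_const (c i)

theorem mem_nedelecW1_of_isPolyVec3 {p : ℕ} {P : (Fin 3 → ℝ) → Fin 3 → ℝ}
    (hP : IsPolyVec3 p P) : P ∈ NedelecW1 p := by
  refine ⟨P, 0, hP, fun _ => IsPoly3.const 0, fun x => ?_⟩
  funext i
  fin_cases i <;> simp [cross3]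

/-- The tangential trace of `W¹_p(T)` onto an edge `e = [a,b]`
(with unit tangent `t_e`, arclength parametrization `s ↦ a + s t_e`) is exactly
the space of univariate polynomials of degree ≤ p. -/
theorem nedelecW1_edge_trace (p : ℕ) (a b : Fin 3 → ℝ) (hab : a ≠ b)
    (t : Fin 3 → ℝ) (ht : t = (Real.sqrt (dot3 (b - a) (b - a)))⁻¹ • (b - a)) :
    {g : ℝ → ℝ | ∃ v ∈ NedelecW1 p, ∀ s : ℝ, g s = dot3 (v (a + s • t)) t} =
      {g : ℝ → ℝ | ∃ q : Polynomial ℝ, q.natDegree ≤ p ∧ ∀ s, g s = q.eval s} := by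
  have htt : dot3 t t = 1 := ht ▸ dot3_inv_sqrt_smul_self (sub_ne_zero.mpr hab.symm)
  ext g
  constructor
  · rintro ⟨v, ⟨P, Q, hP, hQ, hv⟩, hg⟩
    obtain ⟨q, hq, hfq⟩ :=
      ((hP.dot3_const t).add (hQ.dot3_const (cross3 a t))).exists_polynomial_eval_line a t
    refine ⟨q, hq, fun s => ?_⟩
    rw [hg, hv, ← hfq, ← dot3_cross3_add_smul (Q (a + s • t)) a t s]
    exact add_dotProduct _ _ _
  · rintro ⟨q, hq, hg⟩
    have hm : IsPoly3 p fun x => q.eval (dot3 (x - a) t) :=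
      (((isPolyVec3_sub_const a).dot3_const t).polynomial_eval q).mono (by simpa using hq)
    refine ⟨_, mem_nedelecW1_of_isPolyVec3 (hm.smul_const t), fun s => ?_⟩
    simp only [hg, dot3_eq_dotProduct, add_sub_cancel_left, smul_dotProduct, smul_eq_mul]
    rw [← dot3_eq_dotProduct, htt, mul_one, mul_one]
end
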